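/- Let k = 5 and let σ = (σ^{ij})_{1≤i,j≤5} be an admissible family such that σ^{12} is the 4×4 identity matrix and the 20 × 20 block matrix σ has rank 8. Then for every (b₃, b₄, b₅) ∈ ℂ³ with (b₃, b₄, b₅) ≠ (0,0,0) there exist b₁, b₂ ∈ ℂ and a nonzero vector f ∈ ℂ⁴ such that σ · v = 0, where v ∈ ℂ^{20} is the column vector whose j-th block of size 4 is b_j f (for j = 1,…,5). -/

import Mathlib

open Matrix

/-- A family `σ = (σ^{ij})` of complex `4×4` matrices is *admissible* if each `σ i j` is
symmetric and `σ i j = -σ j i`. -/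
def Admissible (k : ℕ) (σ : Fin k → Fin k → Matrix (Fin 4) (Fin 4) ℂ) : Prop :=
  (∀ i j, (σ i j)ᵀ = σ i j) ∧ (∀ i j, σ i j = -σ j i)

/-- The `4k × 4k` block matrix whose `(i,j)` block is `σ i j`. -/
def blockMat (k : ℕ) (σ : Fin k → Fin k → Matrix (Fin 4) (Fin 4) ℂ) :
    Matrix (Fin k × Fin 4) (Fin k × Fin 4) ℂ :=
  Matrix.of fun p q => σ p.1 q.1 p.2 q.2

/-!
The block rows `1` and `2` of `σ` contain the blocks `σ¹² = 1` and `σ²¹ = -1` against zero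
diagonal blocks, so their 8 rows are independent; rank 8 then means that a vector killed by
these two block rows is killed by all of `σ`. Testing this on suitable vectors gives
`σ^{ij} = σ^{i2} σ^{1j} - σ^{i1} σ^{2j}`, and together with antisymmetry this makes
`A = ∑ b_j σ^{1j}` and `B = ∑ b_j σ^{2j}` commute. A common eigenvector `f`, with `A f = α f`
and `B f = β f`, then solves the system with `b₁ = β` and `b₂ = -α`.
-/

theorem Module.End.exists_common_eigenvector {K V : Type*} [Field K] [IsAlgClosed K]
    [AddCommGroup V] [Module K V] [FiniteDimensional K V] [Nontrivial V] {f g : End K V}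
    (h : Commute f g) : ∃ v ≠ 0, ∃ α β : K, f v = α • v ∧ g v = β • v := by
  obtain ⟨α, hα⟩ := f.exists_eigenvalue
  have : Nontrivial (f.eigenspace α) := Submodule.nontrivial_iff_ne_bot.mpr hα
  obtain ⟨β, hβ⟩ := Module.End.exists_eigenvalue (g.restrict (mapsTo_genEigenspace_of_comm h α 1))
  obtain ⟨⟨v, hvα⟩, hv⟩ := hβ.exists_hasEigenvector
  refine ⟨v, by simpa using hv.2, α, β, mem_eigenspace_iff.mp hvα, ?_⟩
  exact congrArg Subtype.val hv.apply_eq_smul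

theorem Matrix.mulVec_eq_zero_of_linearIndependent_rows {K m n ι : Type*} [Field K]
    [Fintype m] [Fintype n] [Fintype ι] {M : Matrix m n K} {s : ι → m}
    (hli : LinearIndependent K (M.row ∘ s)) (hrank : M.rank = Fintype.card ι) {v : n → K}
    (hv : ∀ i, M (s i) ⬝ᵥ v = 0) : M *ᵥ v = 0 := by
  have hspan : Submodule.span K (Set.range (M.row ∘ s)) = Submodule.span K (Set.range M.row) :=
    Submodule.eq_of_le_of_finrank_eq (Submodule.span_mono (Set.range_comp_subset_range s M.row))
      (by rw [finrank_span_eq_card hli, ← rank_eq_finrank_span_row, hrank])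
  funext r
  have hr : M r ∈ Submodule.span K (Set.range (M.row ∘ s)) :=
    hspan ▸ Submodule.subset_span (Set.mem_range_self r)
  obtain ⟨c, hc⟩ := (Submodule.mem_span_range_iff_exists_fun K).mp hr
  change M r ⬝ᵥ v = 0
  simp [← hc, sum_dotProduct, smul_dotProduct, row_apply', hv]

theorem sum_sum_mul_smul_eq_zero_of_antisymm {K V ι : Type*} [Field K] [CharZero K]
    [AddCommGroup V] [Module K V] [Fintype ι] (b : ι → K) {m : ι → ι → V}
    (hm : ∀ i j, m i j = -m j i) : ∑ i, ∑ j, (b i * b j) • m i j = 0 := by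
  have h : ∑ i, ∑ j, (b i * b j) • m i j = -∑ i, ∑ j, (b i * b j) • m i j := by
    conv_rhs => rw [Finset.sum_comm]
    simp only [← Finset.sum_neg_distrib, ← smul_neg, ← hm, mul_comm]
  linear_combination (norm := module) (2⁻¹ : K) • h

theorem blockMat_mulVec_apply {k : ℕ} (σ : Fin k → Fin k → Matrix (Fin 4) (Fin 4) ℂ)
    (v : Fin k × Fin 4 → ℂ) (i : Fin k) (p : Fin 4) :
    (blockMat k σ *ᵥ v) (i, p) = (∑ j, σ i j *ᵥ fun q => v (j, q)) p := by
  simp [mulVec, dotProduct, blockMat, Fintype.sum_prod_type, Finset.sum_apply]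

namespace Admissible

variable {k : ℕ} {σ : Fin k → Fin k → Matrix (Fin 4) (Fin 4) ℂ} {i₀ i₁ : Fin k}

theorem diag_eq_zero (hσ : Admissible k σ) (i : Fin k) : σ i i = 0 := by
  linear_combination (norm := module) (2⁻¹ : ℂ) • hσ.2 i i

theorem linearIndependent_pivot_rows (hσ : Admissible k σ) (h01 : σ i₀ i₁ = 1) :
    LinearIndependent ℂ ((blockMat k σ).row ∘ fun r : Fin 2 × Fin 4 => (![i₀, i₁] r.1, r.2)) := by
  have h10 : σ i₁ i₀ = -1 := by rw [hσ.2, h01]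
  rw [Fintype.linearIndependent_iff]
  intro c hc
  have hcol : ∀ j q, ∑ p, (c (0, p) * σ i₀ j p q + c (1, p) * σ i₁ j p q) = 0 := fun j q => by
    simpa [Fintype.sum_prod_type, blockMat, Finset.sum_add_distrib] using congrFun hc (j, q)
  rintro ⟨e, q⟩
  fin_cases e
  · simpa [h01, hσ.diag_eq_zero, one_apply] using hcol i₁ q
  · simpa [h10, hσ.diag_eq_zero, one_apply] using hcol i₀ q

theorem sum_mulVec_eq_zero_of_pivot (hσ : Admissible k σ) (h01 : σ i₀ i₁ = 1)
    (hrank : (blockMat k σ).rank = 8) {w : Fin k → Fin 4 → ℂ}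
    (h₀ : ∑ j, σ i₀ j *ᵥ w j = 0) (h₁ : ∑ j, σ i₁ j *ᵥ w j = 0) (i : Fin k) :
    ∑ j, σ i j *ᵥ w j = 0 := by
  have hker : blockMat k σ *ᵥ (fun q => w q.1 q.2) = 0 := by
    refine mulVec_eq_zero_of_linearIndependent_rows (hσ.linearIndependent_pivot_rows h01)
      (by simpa using hrank) ?_
    rintro ⟨e, p⟩
    change (blockMat k σ *ᵥ (fun q => w q.1 q.2)) _ = 0
    fin_cases e
    · exact (blockMat_mulVec_apply _ _ _ _).trans (congrFun h₀ p)
    · exact (blockMat_mulVec_apply _ _ _ _).trans (congrFun h₁ p)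
  funext p
  simpa [blockMat_mulVec_apply] using congrFun hker (i, p)

theorem eq_mul_sub_mul (hσ : Admissible k σ) (h01 : σ i₀ i₁ = 1)
    (hrank : (blockMat k σ).rank = 8) (i j : Fin k) :
    σ i j = σ i i₁ * σ i₀ j - σ i i₀ * σ i₁ j := by
  rw [← sub_eq_zero, ext_iff_mulVec]
  intro x
  have hsingle : ∀ l m₀ (y : Fin 4 → ℂ),
      ∑ m, σ l m *ᵥ (Pi.single m₀ y : Fin k → Fin 4 → ℂ) m = σ l m₀ *ᵥ y := by
    intro l m₀ y
    rw [Fintype.sum_eq_single m₀ fun m hm => by rw [Pi.single_eq_of_ne hm, mulVec_zero],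
      Pi.single_eq_same]
  let w : Fin k → Fin 4 → ℂ :=
    Pi.single j x + Pi.single i₀ (σ i₁ j *ᵥ x) - Pi.single i₁ (σ i₀ j *ᵥ x)
  have hw : ∀ l, ∑ m, σ l m *ᵥ w m = (σ l j - (σ l i₁ * σ i₀ j - σ l i₀ * σ i₁ j)) *ᵥ x := by
    intro l
    simp only [w, Pi.add_apply, Pi.sub_apply, mulVec_add, mulVec_sub, Finset.sum_add_distrib,
      Finset.sum_sub_distrib, hsingle, sub_mulVec, mulVec_mulVec]
    abel
  have h10 : σ i₁ i₀ = -1 := by rw [hσ.2, h01]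
  rw [zero_mulVec, ← hw i]
  exact hσ.sum_mulVec_eq_zero_of_pivot h01 hrank (w := w) (by simp [hw, h01, hσ.diag_eq_zero])
    (by simp [hw, h10, hσ.diag_eq_zero]) i

theorem commute_sum_smul (hσ : Admissible k σ) (h01 : σ i₀ i₁ = 1)
    (hrank : (blockMat k σ).rank = 8) (b : Fin k → ℂ) :
    Commute (∑ j, b j • σ i₀ j) (∑ j, b j • σ i₁ j) := by
  rw [Commute, SemiconjBy, ← sub_eq_zero,
    ← sum_sum_mul_smul_eq_zero_of_antisymm b (m := σ) hσ.2]
  simp only [Finset.sum_mul_sum, ← Finset.sum_sub_distrib, smul_mul_smul_comm]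
  refine Finset.sum_congr rfl fun i _ => Finset.sum_congr rfl fun j _ => ?_
  rw [hσ.eq_mul_sub_mul h01 hrank i j, hσ.2 i i₁, hσ.2 i i₀]
  simp only [neg_mul, sub_neg_eq_add, smul_add, smul_neg]
  abel

theorem exists_mulVec_eq_zero (hσ : Admissible k σ) (h01 : σ i₀ i₁ = 1)
    (hrank : (blockMat k σ).rank = 8) (b : Fin k → ℂ) :
    ∃ α β : ℂ, ∃ f : Fin 4 → ℂ, f ≠ 0 ∧
      blockMat k σ *ᵥ (fun q => (b + Pi.single i₀ β - Pi.single i₁ α : Fin k → ℂ) q.1 * f q.2)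
        = 0 := by
  obtain ⟨f, hf, α, β, hAf, hBf⟩ :=
    Module.End.exists_common_eigenvector ((hσ.commute_sum_smul h01 hrank b).map toLinAlgEquiv')
  refine ⟨α, β, f, hf, ?_⟩
  set b' : Fin k → ℂ := b + Pi.single i₀ β - Pi.single i₁ α
  rw [toLinAlgEquiv'_apply] at hAf hBf
  have hrow : ∀ i, ∑ j, σ i j *ᵥ (b' j • f) =
      (∑ j, b j • σ i j) *ᵥ f + β • σ i i₀ *ᵥ f - α • σ i i₁ *ᵥ f := by
    intro i
    simp only [b', Pi.add_apply, Pi.sub_apply, add_smul, sub_smul, mulVec_add, mulVec_sub,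
      Finset.sum_add_distrib, Finset.sum_sub_distrib, mulVec_smul, sum_mulVec, smul_mulVec]
    simp [Pi.single_apply, ite_smul]
  funext ⟨i, p⟩
  rw [blockMat_mulVec_apply]
  refine congrFun (hσ.sum_mulVec_eq_zero_of_pivot h01 hrank (w := fun j => b' j • f) ?_ ?_ i) p
  · rw [hrow, hσ.diag_eq_zero, h01, hAf]
    simp
  · rw [hrow, hσ.diag_eq_zero, hσ.2, h01, hBf]
    simp [neg_mulVec]

end Admissible

/-- Let `k = 5` and let `σ` be an admissible family with `σ¹² = 1` and
`20 × 20` block matrix of rank `8`.  Then for every `(b₃, b₄, b₅) ≠ (0,0,0)` there exist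
`b₁, b₂ ∈ ℂ` and a nonzero `f ∈ ℂ⁴` such that `σ · v = 0`, where `v` is the column whose
`j`-th block of size 4 is `b_j f`. -/
theorem stmt7 (σ : Fin 5 → Fin 5 → Matrix (Fin 4) (Fin 4) ℂ) (hσ : Admissible 5 σ)
    (h12 : σ 0 1 = 1) (hrank : (blockMat 5 σ).rank = 8) :
    ∀ b3 b4 b5 : ℂ, ¬(b3 = 0 ∧ b4 = 0 ∧ b5 = 0) →
      ∃ (b1 b2 : ℂ) (f : Fin 4 → ℂ), f ≠ 0 ∧
        (blockMat 5 σ).mulVec (fun q => ![b1, b2, b3, b4, b5] q.1 * f q.2) = 0 := by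
  intro b3 b4 b5 _
  obtain ⟨α, β, f, hf, hker⟩ := hσ.exists_mulVec_eq_zero h12 hrank ![0, 0, b3, b4, b5]
  refine ⟨β, -α, f, hf, ?_⟩
  have hb : ![β, -α, b3, b4, b5] = ![0, 0, b3, b4, b5] + Pi.single 0 β - Pi.single 1 α := by
    funext j
    simp only [Pi.add_apply, Pi.sub_apply, Pi.single_apply]
    fin_cases j <;> simp
  rwa [hb]
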